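/- Let d ≥ 1, let Δ be a d-dimensional simplicial complex on n vertices with H̃_d(Δ; K) ≠ 0, and set J = I_Δ + (x_1^{d+2},...,x_n^{d+2}) and L = x_1 + ... + x_n. Then the multiplication map ×L : (R/J)_{C(d+2,2)−1} → (R/J)_{C(d+2,2)} is not surjective. -/

import Mathlib

/-!
A nonzero top cycle `z` of `Δ` gives the element
`F = ∑_σ z_σ ∑_π sgn π ∏_i x_{σ_i} ^ (π i + 1)` of the inverse system of `J`: the coefficient of
`x^a` in `F` is `z (supp a)` times the sign of `a` as a staircase on its support (`cycleDual`).
Its exponents are at most `d + 1` and its supports are faces, so `F` is orthogonal to `J` under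
the coefficient pairing. Contracting `F` by `L` gives zero: lowering a vertex of value at least
`2` creates a repeated value, and the two lowerings creating the same repetition cancel, while
lowering the vertex of value `1` produces the boundary of `z`, which vanishes. So `F` is
orthogonal to `L · R + J` but not to `x^a` for a staircase `a` on a face `σ` with `z_σ ≠ 0`, a
monomial of degree `C(d + 2, 2)`.
-/

open MvPolynomial

/-- The Stanley–Reisner ideal of a simplicial complex `Δ` on vertex set `Fin n`. -/
noncomputable def SRIdeal (K : Type*) [Field K] (n : ℕ) (Δ : Finset (Finset (Fin n))) :
    Ideal (MvPolynomial (Fin n) K) :=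
  Ideal.span {p | ∃ τ : Finset (Fin n), τ ∉ Δ ∧ p = ∏ j ∈ τ, X j}

/-- The degree-`t` graded piece of `R/J`: the image in `R/J` of the homogeneous
polynomials of degree `t`. -/
noncomputable def quotPiece (K : Type*) [Field K] {n : ℕ}
    (J : Ideal (MvPolynomial (Fin n) K)) (t : ℕ) :
    Submodule K (MvPolynomial (Fin n) K ⧸ J) :=
  Submodule.map (Ideal.Quotient.mkₐ K J).toLinearMap (homogeneousSubmodule (Fin n) K t)

/-- The coefficient of `τ` in the simplicial boundary of `F`. -/
def bdryCoeff {n : ℕ} (F τ : Finset (Fin n)) : ℤ :=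
  if τ ⊆ F then ∑ v ∈ F \ τ, (-1) ^ ((F.filter fun w => w < v).card) else 0

open Finset

section Vandermonde

variable {ι R : Type*} [LinearOrder ι] [CommRing R]

def vandermondeProd (s : Finset ι) (f : ι → R) : R :=
  ∏ u ∈ s, ∏ w ∈ s with u < w, (f w - f u)

lemma vandermondeProd_congr {s : Finset ι} {f g : ι → R} (h : ∀ u ∈ s, f u = g u) :
    vandermondeProd s f = vandermondeProd s g :=
  prod_congr rfl fun u hu => prod_congr rfl fun w hw => by rw [h u hu, h w (mem_filter.1 hw).1]

lemma vandermondeProd_insert {s : Finset ι} {v : ι} (hv : v ∉ s) (f : ι → R) :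
    vandermondeProd (insert v s) f =
      vandermondeProd s f * ∏ w ∈ s, if w < v then f v - f w else f w - f v := by
  have hinner : ∀ u ∈ s, ∏ w ∈ insert v s with u < w, (f w - f u) =
      (∏ w ∈ s with u < w, (f w - f u)) * if u < v then f v - f u else 1 := by
    intro u _
    rw [filter_insert]
    split_ifs with h
    · rw [prod_insert (by simp [hv]), mul_comm]
    · rw [mul_one]
  have hgt : s.filter (fun w => ¬ w < v) = s.filter (v < ·) :=
    filter_congr fun w hw => by simp [lt_iff_le_and_ne, ne_of_mem_of_not_mem hw hv]
  rw [vandermondeProd, prod_insert hv, filter_insert, if_neg (lt_irrefl v),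
    prod_congr rfl hinner, prod_mul_distrib, prod_ite, prod_const_one, mul_one, prod_ite, hgt,
    vandermondeProd]
  ring

lemma vandermondeProd_eq_det (s : Finset ι) (f : ι → R) :
    vandermondeProd s f = (Matrix.vandermonde (f ∘ s.orderEmbOfFin rfl)).det := by
  set e := s.orderEmbOfFin rfl
  have himage : ∀ i, (univ.image e).filter (e i < ·) = (Ioi i).image e := by
    intro i
    rw [filter_image]
    congr 1
    ext j
    simp [e.lt_iff_lt]
  rw [Matrix.det_vandermonde, vandermondeProd]
  conv_lhs => rw [← image_orderEmbOfFin_univ s rfl]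
  rw [prod_image e.injective.injOn]
  refine prod_congr rfl fun i _ => ?_
  rw [himage, prod_image e.injective.injOn]
  rfl

lemma vandermondeProd_comp_swap {s : Finset ι} {v w : ι} (hv : v ∈ s) (hw : w ∈ s)
    (hvw : v ≠ w) (f : ι → R) :
    vandermondeProd s (f ∘ Equiv.swap v w) = -vandermondeProd s f := by
  set e := s.orderEmbOfFin rfl
  have hrange : ∀ u ∈ s, ∃ i, e i = u := fun u hu => by
    rwa [← Set.mem_range, range_orderEmbOfFin]
  obtain ⟨i, rfl⟩ := hrange v hv
  obtain ⟨j, rfl⟩ := hrange w hw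
  have hcomp : f ∘ Equiv.swap (e i) (e j) ∘ e = (f ∘ e) ∘ Equiv.swap i j := by
    ext k
    exact congrArg f (e.injective.swap_apply i j k)
  rw [vandermondeProd_eq_det, vandermondeProd_eq_det, Function.comp_assoc, hcomp]
  change ((Matrix.vandermonde (f ∘ e)).submatrix (Equiv.swap i j) id).det = _
  rw [Matrix.det_permute, Equiv.Perm.sign_swap (ne_of_apply_ne e hvw)]
  simp [e]

lemma vandermondeProd_eq_zero {s : Finset ι} {v w : ι} (hv : v ∈ s) (hw : w ∈ s)
    (hvw : v ≠ w) {f : ι → R} (hf : f v = f w) : vandermondeProd s f = 0 := by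
  wlog hlt : v < w generalizing v w
  · exact this hw hv hvw.symm hf.symm (hvw.lt_or_gt.resolve_left hlt)
  exact prod_eq_zero hv (prod_eq_zero (mem_filter.2 ⟨hw, hlt⟩) (by rw [hf, sub_self]))

end Vandermonde

section Staircase

variable {ι : Type*} [LinearOrder ι]

/-- For `f` positive on `s`, this is the sign of `f` as a bijection from the ordered set `s` onto
`{1, …, #s}`, and `0` if `f` is no such bijection. -/
def stairSign (s : Finset ι) (f : ι → ℕ) : ℤ :=
  if ∀ u ∈ s, f u ≤ #s then (vandermondeProd s fun u => (f u : ℤ)).sign else 0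

lemma stairSign_eq_zero_of_eq {s : Finset ι} {f : ι → ℕ} {v w : ι} (hv : v ∈ s) (hw : w ∈ s)
    (hvw : v ≠ w) (hf : f v = f w) : stairSign s f = 0 := by
  have hzero : vandermondeProd s (fun u => (f u : ℤ)) = 0 :=
    vandermondeProd_eq_zero hv hw hvw (by rw [hf])
  rw [stairSign, hzero, Int.sign_zero, ite_self]

lemma stairSign_comp_swap {s : Finset ι} {v w : ι} (hv : v ∈ s) (hw : w ∈ s) (hvw : v ≠ w)
    (f : ι → ℕ) : stairSign s (f ∘ Equiv.swap v w) = -stairSign s f := by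
  have hmem : ∀ u ∈ s, Equiv.swap v w u ∈ s := fun u hu => by
    rw [Equiv.swap_apply_def]
    split_ifs <;> assumption
  have hbound : (∀ u ∈ s, (f ∘ Equiv.swap v w) u ≤ #s) ↔ ∀ u ∈ s, f u ≤ #s :=
    ⟨fun h u hu => by simpa using h _ (hmem u hu), fun h u hu => h _ (hmem u hu)⟩
  have hvp : vandermondeProd s (fun u => ((f ∘ Equiv.swap v w) u : ℤ)) =
      -vandermondeProd s (fun u => (f u : ℤ)) :=
    vandermondeProd_comp_swap hv hw hvw (fun u => (f u : ℤ))
  simp only [stairSign, hbound, hvp, Int.sign_neg, apply_ite Neg.neg, neg_zero]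

lemma injOn_of_stairSign_ne_zero {s : Finset ι} {f : ι → ℕ} (h : stairSign s f ≠ 0) :
    Set.InjOn f s := fun v hv w hw hf => by
  by_contra hvw
  exact h (stairSign_eq_zero_of_eq hv hw hvw hf)

lemma le_card_of_stairSign_ne_zero {s : Finset ι} {f : ι → ℕ} (h : stairSign s f ≠ 0) :
    ∀ u ∈ s, f u ≤ #s := by
  by_contra hf
  exact h (if_neg hf)

lemma image_eq_Icc_of_stairSign_ne_zero {s : Finset ι} {f : ι → ℕ} (hpos : ∀ u ∈ s, 0 < f u)
    (h : stairSign s f ≠ 0) : s.image f = Icc 1 #s := by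
  refine eq_of_subset_of_card_le (fun i hi => ?_) ?_
  · obtain ⟨u, hu, rfl⟩ := mem_image.1 hi
    exact mem_Icc.2 ⟨hpos u hu, le_card_of_stairSign_ne_zero h u hu⟩
  · rw [Nat.card_Icc, card_image_of_injOn (injOn_of_stairSign_ne_zero h)]
    omega

lemma degree_eq_choose_of_stairSign_ne_zero {a : ι →₀ ℕ} (h : stairSign a.support a ≠ 0) :
    a.degree = (#a.support + 1).choose 2 := by
  have hpos : ∀ u ∈ a.support, 0 < a u := fun u hu =>
    Nat.pos_of_ne_zero (Finsupp.mem_support_iff.1 hu)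
  have hsum := sum_image (f := fun i : ℕ => i) (injOn_of_stairSign_ne_zero h)
  rw [image_eq_Icc_of_stairSign_ne_zero hpos h] at hsum
  rw [Finsupp.degree_apply, ← hsum, ← Nat.sum_Icc_choose]
  simp

lemma exists_stairSign_eq_one (s : Finset ι) :
    ∃ a : ι →₀ ℕ, a.support = s ∧ stairSign s a = 1 := by
  let rank : ι → ℕ := fun u => if u ∈ s then #{w ∈ s | w ≤ u} else 0
  have hpos : ∀ u ∈ s, 0 < rank u := fun u hu => by
    simp only [rank, if_pos hu]
    exact card_pos.2 ⟨u, mem_filter.2 ⟨hu, le_rfl⟩⟩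
  have hle : ∀ u ∈ s, rank u ≤ #s := fun u hu => by
    simp only [rank, if_pos hu]
    exact card_filter_le _ _
  have hmono : ∀ u ∈ s, ∀ w ∈ s, u < w → rank u < rank w := by
    intro u hu w hw huw
    simp only [rank, if_pos hu, if_pos hw]
    refine card_lt_card ((ssubset_iff_of_subset fun x hx => ?_).2 ⟨w, ?_, ?_⟩)
    · exact mem_filter.2 ⟨(mem_filter.1 hx).1, (mem_filter.1 hx).2.trans huw.le⟩
    · exact mem_filter.2 ⟨hw, le_rfl⟩
    · exact fun h => (mem_filter.1 h).2.not_gt huw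
  have hvp : 0 < vandermondeProd s fun u => (rank u : ℤ) :=
    prod_pos fun u hu => prod_pos fun w hw =>
      sub_pos.2 (Nat.cast_lt.2 (hmono u hu w (mem_filter.1 hw).1 (mem_filter.1 hw).2))
  refine ⟨Finsupp.onFinset s rank fun u hu => ?_, ?_, ?_⟩
  · by_contra h
    exact hu (if_neg h)
  · ext u
    rw [Finsupp.support_onFinset, mem_filter]
    exact ⟨And.left, fun hu => ⟨hu, (hpos u hu).ne'⟩⟩
  · simpa [stairSign, Int.sign_eq_one_of_pos hvp] using hle

lemma sum_stairSign_add_single (b : ι →₀ ℕ) :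
    ∑ v ∈ b.support, stairSign b.support (b + Finsupp.single v 1 : ι →₀ ℕ) = 0 := by
  -- If `b + e_v` is a staircase, the value `b v` is taken at exactly one other vertex `w`, and
  -- `b + e_w` is `b + e_v` with `v` and `w` swapped; every other term has a repeated value.
  by_contra hsum
  obtain ⟨v, hv, hne⟩ := exists_ne_zero_of_sum_ne_zero hsum
  set a : ι →₀ ℕ := b + Finsupp.single v 1 with ha
  have hav : ∀ u ≠ v, a u = b u := fun u hu => by simp [ha, hu]
  have hpos : ∀ u ∈ b.support, 0 < a u := fun u hu => by
    have := Finsupp.mem_support_iff.1 hu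
    simp only [ha, Finsupp.coe_add, Pi.add_apply]
    omega
  have hbv : b v ∈ b.support.image a := by
    have hle := le_card_of_stairSign_ne_zero hne v hv
    have := Finsupp.mem_support_iff.1 hv
    simp only [ha, Finsupp.coe_add, Pi.add_apply, Finsupp.single_eq_same] at hle
    rw [image_eq_Icc_of_stairSign_ne_zero hpos hne, mem_Icc]
    omega
  obtain ⟨w, hw, hbw⟩ := mem_image.1 hbv
  have hwv : w ≠ v := by
    rintro rfl
    simp [ha] at hbw
  rw [hav w hwv] at hbw
  have hswap : ((b + Finsupp.single w 1 : ι →₀ ℕ) : ι → ℕ) = a ∘ Equiv.swap v w := by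
    ext u
    rcases eq_or_ne u v with rfl | huv
    · simp [ha, hwv, hbw]
    rcases eq_or_ne u w with rfl | huw
    · simp [ha, hbw]
    · simp [ha, Equiv.swap_apply_of_ne_of_ne huv huw, huv, huw]
  refine hsum ((sum_eq_add_of_mem v w hv hw hwv.symm fun u _ hu => ?_).trans ?_)
  · refine stairSign_eq_zero_of_eq hv hw hwv.symm ?_
    simp [hu.1.symm, hu.2.symm, hbw]
  · rw [hswap, stairSign_comp_swap hv hw hwv.symm, add_neg_cancel]

lemma exists_stairSign_insert (b : ι →₀ ℕ) : ∃ e : ℤ, ∀ v ∉ b.support,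
    stairSign (insert v b.support) (b + Finsupp.single v 1 : ι →₀ ℕ) =
      (-1) ^ #{w ∈ b.support | w < v} * e := by
  set τ := b.support
  -- `e` is the sign of `b` as a staircase on the values `2, …, #τ + 1`.
  refine ⟨if ∀ u ∈ τ, b u ≤ #τ + 1 then
    (vandermondeProd τ (fun u => (b u : ℤ)) * ∏ w ∈ τ, ((b w : ℤ) - 1)).sign else 0,
    fun v hv => ?_⟩
  set a : ι →₀ ℕ := b + Finsupp.single v 1 with ha
  have hav : a v = 1 := by simp [ha, Finsupp.notMem_support_iff.1 hv]
  have haτ : ∀ u ∈ τ, a u = b u := fun u hu => by simp [ha, ne_of_mem_of_not_mem hu hv]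
  have hbound : (∀ u ∈ insert v τ, a u ≤ #(insert v τ)) ↔ ∀ u ∈ τ, b u ≤ #τ + 1 := by
    rw [card_insert_of_notMem hv, forall_mem_insert, hav]
    exact ⟨fun h => fun u hu => haτ u hu ▸ h.2 u hu,
      fun h => ⟨by omega, fun u hu => (haτ u hu).symm ▸ h u hu⟩⟩
  have hfacet : ∏ w ∈ τ, (if w < v then (a v : ℤ) - a w else (a w : ℤ) - a v) =
      (-1) ^ #{w ∈ τ | w < v} * ∏ w ∈ τ, ((b w : ℤ) - 1) := by
    calc _ = ∏ w ∈ τ, ((if w < v then -1 else 1) * ((b w : ℤ) - 1)) :=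
          prod_congr rfl fun w hw => by
            rw [hav, haτ w hw]
            split_ifs <;> push_cast <;> ring
      _ = _ := by rw [prod_mul_distrib, prod_ite, prod_const, prod_const_one, mul_one]
  rw [stairSign, if_congr hbound rfl rfl, vandermondeProd_insert hv,
    vandermondeProd_congr (fun u hu => congrArg (fun n : ℕ => (n : ℤ)) (haτ u hu)), hfacet]
  split_ifs
  · rcases neg_one_pow_eq_or ℤ #{w ∈ τ | w < v} with h | h <;> simp [h, Int.sign_mul]
  · rw [mul_zero]

end Staircase

section InverseSystem

variable {σ R : Type*} [CommSemiring R]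

noncomputable def pairing (F : (σ →₀ ℕ) → R) : MvPolynomial σ R →ₗ[R] R :=
  Finsupp.linearCombination R F ∘ₗ (AddMonoidAlgebra.coeffLinearEquiv R).toLinearMap

lemma pairing_apply (F : (σ →₀ ℕ) → R) (p : MvPolynomial σ R) :
    pairing F p = ∑ a ∈ p.support, coeff a p * F a :=
  rfl

lemma pairing_monomial (F : (σ →₀ ℕ) → R) (a : σ →₀ ℕ) (r : R) :
    pairing F (monomial a r) = r * F a := by
  simp [pairing, MvPolynomial.monomial]

lemma pairing_eq_zero_of_mem_span_monomial {F : (σ →₀ ℕ) → R} {G : Set (σ →₀ ℕ)}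
    (hF : ∀ a, F a ≠ 0 → ∀ g ∈ G, ¬g ≤ a) {p : MvPolynomial σ R}
    (hp : p ∈ Ideal.span ((fun g => monomial g (1 : R)) '' G)) : pairing F p = 0 := by
  rw [pairing_apply]
  refine sum_eq_zero fun a ha => ?_
  obtain ⟨g, hg, hga⟩ := mem_ideal_span_monomial_image.1 hp a ha
  by_contra h
  exact hF a (right_ne_zero_of_mul h) g hg hga

lemma pairing_sum_X_mul_eq_zero [Fintype σ] {F : (σ →₀ ℕ) → R}
    (hF : ∀ b, ∑ v, F (b + Finsupp.single v 1) = 0) (p : MvPolynomial σ R) :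
    pairing F ((∑ v, X v) * p) = 0 := by
  induction p using MvPolynomial.induction_on' with
  | monomial b r =>
    simp only [sum_mul, map_sum, X, monomial_mul, pairing_monomial, one_mul, ← mul_sum]
    simp_rw [add_comm (Finsupp.single _ 1) b]
    rw [hF, mul_zero]
  | add p q hp hq => rw [mul_add, map_add, hp, hq, add_zero]

end InverseSystem

lemma Finsupp.support_add_single_one {ι : Type*} [DecidableEq ι] (b : ι →₀ ℕ) (v : ι) :
    (b + Finsupp.single v 1).support = insert v b.support := by
  ext u
  rcases eq_or_ne u v with rfl | huv
  · simp
  · simp [huv]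

section Simplicial

variable {R : Type*} [CommRing R] {n : ℕ}

lemma bdryCoeff_insert {τ : Finset (Fin n)} {v : Fin n} (hv : v ∉ τ) :
    bdryCoeff (insert v τ) τ = (-1) ^ #{w ∈ τ | w < v} := by
  rw [bdryCoeff, if_pos (subset_insert v τ), insert_sdiff_cancel hv, sum_singleton,
    filter_insert, if_neg (lt_irrefl v)]

lemma sum_compl_insert_mul_bdryCoeff {τ : Finset (Fin n)} {z : Finset (Fin n) → R}
    (hz : ∀ σ, z σ ≠ 0 → #σ = #τ + 1) :
    ∑ v ∈ τᶜ, z (insert v τ) * bdryCoeff (insert v τ) τ = ∑ σ, z σ * bdryCoeff σ τ := by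
  refine sum_bij_ne_zero (fun v _ _ => insert v τ) (fun _ _ _ => mem_univ _)
    (fun v hv _ w hw _ h => ?_) (fun σ _ hσ => ?_) (fun _ _ _ => rfl)
  · have hvw := h ▸ mem_insert_self v τ
    exact (mem_insert.1 hvw).resolve_right (mem_compl.1 hv)
  · have hτσ : τ ⊆ σ := by
      by_contra h
      simp [bdryCoeff, h] at hσ
    obtain ⟨v, hv⟩ := card_eq_one.1 (by
      rw [card_sdiff_of_subset hτσ, hz σ (left_ne_zero_of_mul hσ)]
      omega : #(σ \ τ) = 1)
    have hvτ : v ∉ τ := (mem_sdiff.1 (hv ▸ mem_singleton_self v)).2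
    have hσ_eq : insert v τ = σ := by
      rw [← union_sdiff_of_subset hτσ, hv, union_comm, singleton_union]
    exact ⟨v, mem_compl.2 hvτ, hσ_eq ▸ hσ, hσ_eq⟩

def cycleDual (z : Finset (Fin n) → R) (a : Fin n →₀ ℕ) : R :=
  z a.support * stairSign a.support a

lemma sum_cycleDual_add_single {d : ℕ} {z : Finset (Fin n) → R}
    (hz : ∀ σ, z σ ≠ 0 → #σ = d + 1)
    (hcyc : ∀ τ : Finset (Fin n), #τ = d → ∑ σ, z σ * bdryCoeff σ τ = 0) (b : Fin n →₀ ℕ) :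
    ∑ v, cycleDual z (b + Finsupp.single v 1) = 0 := by
  set τ := b.support
  have hin : ∑ v ∈ τ, cycleDual z (b + Finsupp.single v 1) = 0 := by
    rw [sum_congr rfl fun v hv => by
      rw [cycleDual, Finsupp.support_add_single_one, insert_eq_of_mem hv], ← mul_sum]
    rw [← Int.cast_sum, sum_stairSign_add_single b, Int.cast_zero, mul_zero]
  obtain ⟨e, he⟩ := exists_stairSign_insert b
  have hout : ∑ v ∈ τᶜ, cycleDual z (b + Finsupp.single v 1) = 0 := by
    have hterm : ∀ v ∈ τᶜ, cycleDual z (b + Finsupp.single v 1) =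
        e * (z (insert v τ) * bdryCoeff (insert v τ) τ) := fun v hv => by
      rw [cycleDual, Finsupp.support_add_single_one, he v (mem_compl.1 hv),
        bdryCoeff_insert (mem_compl.1 hv)]
      push_cast
      ring
    rw [sum_congr rfl hterm, ← mul_sum]
    by_cases hτ : #τ = d
    · rw [sum_compl_insert_mul_bdryCoeff (fun σ hσ => hτ ▸ hz σ hσ), hcyc τ hτ, mul_zero]
    · refine mul_eq_zero_of_right _ (sum_eq_zero fun v hv => ?_)
      have : z (insert v τ) = 0 := by
        by_contra h
        have := hz _ h
        rw [card_insert_of_notMem (mem_compl.1 hv)] at this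
        omega
      rw [this, zero_mul]
  rw [← sum_add_sum_compl τ, hin, hout, add_zero]

lemma exists_extend_top_cycle {Δ : Finset (Finset (Fin n))} {d : ℕ}
    (hcyc : ∃ c : {σ // σ ∈ Δ.filter fun σ => #σ = d + 1} → R, c ≠ 0 ∧
      ∀ τ : Finset (Fin n), #τ = d →
        ∑ σ : {σ // σ ∈ Δ.filter fun σ => #σ = d + 1}, c σ * bdryCoeff σ.1 τ = 0) :
    ∃ z : Finset (Fin n) → R, (∀ σ, z σ ≠ 0 → σ ∈ Δ ∧ #σ = d + 1) ∧
      (∀ τ : Finset (Fin n), #τ = d → ∑ σ, z σ * bdryCoeff σ τ = 0) ∧ ∃ σ, z σ ≠ 0 := by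
  set S := Δ.filter fun σ => #σ = d + 1
  obtain ⟨c, hc0, hcyc⟩ := hcyc
  set z : Finset (Fin n) → R := Function.extend Subtype.val c 0
  have hz_val : ∀ σ : S, z σ = c σ := Subtype.val_injective.extend_apply c 0
  have hz_out : ∀ σ ∉ S, z σ = 0 := fun σ hσ =>
    Function.extend_apply' _ _ _ fun ⟨σ', hσ'⟩ => hσ (hσ' ▸ σ'.2)
  obtain ⟨σ₀, hσ₀⟩ := Function.ne_iff.1 hc0
  refine ⟨z, fun σ hσ => mem_filter.1 (by_contra fun h => hσ (hz_out σ h)), fun τ hτ => ?_,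
    σ₀, hz_val σ₀ ▸ hσ₀⟩
  rw [← sum_subset (subset_univ S) fun σ _ hσ => by rw [hz_out σ hσ, zero_mul],
    ← sum_coe_sort S, ← hcyc τ hτ]
  simp_rw [hz_val]

end Simplicial

section StanleyReisner

variable {K : Type*} [Field K] {n : ℕ}

lemma SRIdeal_sup_le_span_monomial (Δ : Finset (Finset (Fin n))) (k : ℕ) :
    SRIdeal K n Δ ⊔ Ideal.span (Set.range fun i : Fin n => (X i : MvPolynomial (Fin n) K) ^ k) ≤
      Ideal.span ((fun g => monomial g (1 : K)) ''
        ({g | ∃ τ ∉ Δ, g = ∑ j ∈ τ, Finsupp.single j 1} ∪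
          Set.range fun i => Finsupp.single i k)) := by
  refine sup_le (Ideal.span_le.2 ?_) (Ideal.span_le.2 ?_)
  · rintro _ ⟨τ, hτ, rfl⟩
    exact Ideal.subset_span ⟨_, Or.inl ⟨τ, hτ, rfl⟩, by simp [monomial_sum_one, X]⟩
  · rintro _ ⟨i, rfl⟩
    exact Ideal.subset_span ⟨_, Or.inr ⟨i, rfl⟩, (X_pow_eq_monomial).symm⟩

lemma pairing_cycleDual_eq_zero_of_mem {Δ : Finset (Finset (Fin n))} {d : ℕ}
    {z : Finset (Fin n) → K} (hdown : ∀ σ ∈ Δ, ∀ τ ⊆ σ, τ ∈ Δ)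
    (hz : ∀ σ, z σ ≠ 0 → σ ∈ Δ ∧ #σ = d + 1) {p : MvPolynomial (Fin n) K}
    (hp : p ∈ SRIdeal K n Δ ⊔
      Ideal.span (Set.range fun i : Fin n => (X i : MvPolynomial (Fin n) K) ^ (d + 2))) :
    pairing (cycleDual z) p = 0 := by
  refine pairing_eq_zero_of_mem_span_monomial (fun a ha g hg hga => ?_)
    (SRIdeal_sup_le_span_monomial Δ (d + 2) hp)
  obtain ⟨hΔ, hcard⟩ := hz _ (left_ne_zero_of_mul ha)
  rcases hg with ⟨τ, hτ, rfl⟩ | ⟨i, rfl⟩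
  · refine hτ (hdown _ hΔ τ fun j hj => Finsupp.mem_support_iff.2 ?_)
    have := hga j
    simp only [Finsupp.coe_finsetSum, Finset.sum_apply, Finsupp.single_apply, sum_ite_eq',
      if_pos hj] at this
    omega
  · have hsign : stairSign a.support a ≠ 0 := fun h => by simp [cycleDual, h] at ha
    have hai := hga i
    simp only [Finsupp.single_eq_same] at hai
    have := le_card_of_stairSign_ne_zero hsign i (Finsupp.mem_support_iff.2 (by omega))
    omega

end StanleyReisner

theorem stmt15_general (K : Type*) [Field K] (n d : ℕ)
    (Δ : Finset (Finset (Fin n)))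
    (hdown : ∀ σ ∈ Δ, ∀ τ ⊆ σ, τ ∈ Δ)
    (hcyc : ∃ c : {σ // σ ∈ Δ.filter fun σ => σ.card = d + 1} → K, c ≠ 0 ∧
      ∀ τ : Finset (Fin n), τ.card = d →
        ∑ σ : {σ // σ ∈ Δ.filter fun σ => σ.card = d + 1},
          c σ * ((bdryCoeff σ.1 τ : ℤ) : K) = 0) :
    ¬ (∀ q ∈ quotPiece K
          (SRIdeal K n Δ ⊔
            Ideal.span (Set.range fun i : Fin n => (X i : MvPolynomial (Fin n) K) ^ (d + 2)))
          ((d + 2).choose 2),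
        ∃ p ∈ quotPiece K
          (SRIdeal K n Δ ⊔
            Ideal.span (Set.range fun i : Fin n => (X i : MvPolynomial (Fin n) K) ^ (d + 2)))
          ((d + 2).choose 2 - 1),
          Ideal.Quotient.mk
            (SRIdeal K n Δ ⊔
              Ideal.span (Set.range fun i : Fin n => (X i : MvPolynomial (Fin n) K) ^ (d + 2)))
            (∑ i : Fin n, X i) * p = q) := by
  obtain ⟨z, hz, hzcyc, σ₀, hσ₀⟩ := exists_extend_top_cycle hcyc
  obtain ⟨a₀, ha₀, hsign⟩ := exists_stairSign_eq_one σ₀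
  have hdeg : a₀.degree = (d + 2).choose 2 := by
    rw [degree_eq_choose_of_stairSign_ne_zero (by rw [ha₀, hsign]; exact one_ne_zero), ha₀,
      (hz σ₀ hσ₀).2]
  intro hsurj
  obtain ⟨_, ⟨p, -, rfl⟩, hp⟩ := hsurj _ ⟨monomial a₀ 1, isHomogeneous_monomial 1 hdeg, rfl⟩
  have hpair := pairing_cycleDual_eq_zero_of_mem hdown hz (Ideal.Quotient.eq.1 hp)
  rw [map_sub, pairing_sum_X_mul_eq_zero (sum_cycleDual_add_single (fun σ h => (hz σ h).2) hzcyc),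
    pairing_monomial, cycleDual, ha₀, hsign] at hpair
  exact hσ₀ (by simpa using hpair)

/-- let `d ≥ 1` and `Δ` a `d`-dimensional simplicial complex on `n`
vertices with `H̃_d(Δ; K) ≠ 0` (i.e. there is a nonzero top cycle), and let
`J = I_Δ + (x_1^{d+2}, …, x_n^{d+2})`, `L = x_1 + ⋯ + x_n`.  Then the multiplication map
`×L : (R/J)_{C(d+2,2)-1} → (R/J)_{C(d+2,2)}` is not surjective. -/
theorem stmt15 (K : Type*) [Field K] (n d : ℕ) (hd : 1 ≤ d)
    (Δ : Finset (Finset (Fin n)))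
    (hdown : ∀ σ ∈ Δ, ∀ τ ⊆ σ, τ ∈ Δ)
    (hdim : ∀ σ ∈ Δ, σ.card ≤ d + 1)
    (hcyc : ∃ c : {σ // σ ∈ Δ.filter fun σ => σ.card = d + 1} → K, c ≠ 0 ∧
      ∀ τ : Finset (Fin n), τ.card = d →
        ∑ σ : {σ // σ ∈ Δ.filter fun σ => σ.card = d + 1},
          c σ * ((bdryCoeff σ.1 τ : ℤ) : K) = 0) :
    ¬ (∀ q ∈ quotPiece K
          (SRIdeal K n Δ ⊔
            Ideal.span (Set.range fun i : Fin n => (X i : MvPolynomial (Fin n) K) ^ (d + 2)))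
          ((d + 2).choose 2),
        ∃ p ∈ quotPiece K
          (SRIdeal K n Δ ⊔
            Ideal.span (Set.range fun i : Fin n => (X i : MvPolynomial (Fin n) K) ^ (d + 2)))
          ((d + 2).choose 2 - 1),
          Ideal.Quotient.mk
            (SRIdeal K n Δ ⊔
              Ideal.span (Set.range fun i : Fin n => (X i : MvPolynomial (Fin n) K) ^ (d + 2)))
            (∑ i : Fin n, X i) * p = q) :=
  stmt15_general K n d Δ hdown hcyc
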